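/- In the braid monoid B₄⁺ presented by ⟨a, b, c ∣ bab = aba, ca = ac, cbc = bcb⟩, for every n ≥ 2 and p ≥ 1 the words c·b·a^n·b^p·c·b and b·c·b·a^n·b·c^p represent the same element. -/

import Mathlib

namespace Stmt18
def a : FreeMonoid (Fin 3) := FreeMonoid.of 0
def b : FreeMonoid (Fin 3) := FreeMonoid.of 1
def c : FreeMonoid (Fin 3) := FreeMonoid.of 2
def rel : FreeMonoid (Fin 3) → FreeMonoid (Fin 3) → Prop :=
  fun x y => (x = b * a * b ∧ y = a * b * a) ∨ (x = c * a ∧ y = a * c) ∨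
    (x = c * b * c ∧ y = b * c * b)

local notation "C" => conGen rel

lemma hca : C (c * a) (a * c) := ConGen.Rel.of _ _ (Or.inr (Or.inl ⟨rfl, rfl⟩))
lemma hcbc : C (c * b * c) (b * c * b) := ConGen.Rel.of _ _ (Or.inr (Or.inr ⟨rfl, rfl⟩))

lemma lcong (x : FreeMonoid (Fin 3)) {y z : FreeMonoid (Fin 3)} (h : C y z) :
    C (x * y) (x * z) := (conGen rel).mul ((conGen rel).refl x) h

lemma rcong {y z : FreeMonoid (Fin 3)} (h : C y z) (x : FreeMonoid (Fin 3)) :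
    C (y * x) (z * x) := (conGen rel).mul h ((conGen rel).refl x)

lemma hcan (n : ℕ) : C (c * a ^ n) (a ^ n * c) := by
  induction n with
  | zero => simpa using (conGen rel).refl c
  | succ k ih =>
    have t1 : C (c * a ^ k * a) (a ^ k * c * a) := rcong ih a
    have t2 : C (a ^ k * (c * a)) (a ^ k * (a * c)) := lcong _ hca
    have := t1.trans (by rw [mul_assoc] at *; exact t2)
    rw [pow_succ, ← mul_assoc]
    rw [mul_assoc] at this
    calc C (c * (a ^ k * a)) (a ^ k * (a * c)) := by rw [← mul_assoc]; exact this
    _ = a ^ k * a * c := by rw [mul_assoc]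
  
lemma hbcb (p : ℕ) (hp : 1 ≤ p) : C (b ^ p * (c * b)) (c * (b * c ^ p)) := by
  induction p, hp using Nat.le_induction with
  | base => simpa [pow_one, mul_assoc] using (conGen rel).symm hcbc
  | succ k hk ih =>
    have t1 : C (b * (b ^ k * (c * b))) (b * (c * (b * c ^ k))) := lcong b ih
    have t2 : C (b * c * b * c ^ k) (c * b * c * c ^ k) := rcong hcbc.symm _
    rw [pow_succ']
    rw [mul_assoc]
    refine (conGen rel).trans t1 ?_
    rw [pow_succ']
    simp only [← mul_assoc] at t2 ⊢
    simpa [mul_assoc] using t2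

theorem stmt18 (n p : ℕ) (hn : 2 ≤ n) (hp : 1 ≤ p) :
    conGen rel (c * b * a ^ n * b ^ p * c * b) (b * c * b * a ^ n * b * c ^ p) := by
  have s1 : C (c * (b * (a ^ n * (b ^ p * (c * b)))))
              (c * (b * (a ^ n * (c * (b * c ^ p))))) :=
    lcong c (lcong b (lcong _ (hbcb p hp)))
  have s2 : C (a ^ n * c * (b * c ^ p)) (c * a ^ n * (b * c ^ p)) :=
    rcong (hcan n).symm _
  have s2' : C (c * (b * (a ^ n * (c * (b * c ^ p)))))
               (c * (b * (c * (a ^ n * (b * c ^ p))))) := by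
    refine lcong c (lcong b ?_)
    simpa [mul_assoc] using s2
  have s3 : C (c * b * c * (a ^ n * (b * c ^ p))) (b * c * b * (a ^ n * (b * c ^ p))) :=
    rcong hcbc _
  have s3' : C (c * (b * (c * (a ^ n * (b * c ^ p)))))
               (b * (c * (b * (a ^ n * (b * c ^ p))))) := by
    simpa [mul_assoc] using s3
  have main := (conGen rel).trans ((conGen rel).trans s1 s2') s3'
  simpa [mul_assoc] using main
end Stmt18
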